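/- If G is a connected graph that is not complete (hence has at least 3 vertices), then the fourth smallest distance Pareto eigenvalue of G is μ₄(G) = 1 + √3. -/

import Mathlib

open Matrix SimpleGraph

/-- `x` is a (unit-normalizable) Pareto eigenvector of `A` associated with `lam`:
`x` is nonzero, entrywise nonnegative, `A x ≥ lam • x` entrywise, and
`lam = xᵀAx / xᵀx`. -/
def IsParetoEigenpair {n : ℕ} (A : Matrix (Fin n) (Fin n) ℝ) (lam : ℝ) (x : Fin n → ℝ) : Prop :=
  x ≠ 0 ∧ (∀ i, 0 ≤ x i) ∧ (∀ i, lam * x i ≤ A.mulVec x i) ∧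
    lam = (x ⬝ᵥ A.mulVec x) / (x ⬝ᵥ x)

/-- `lam` is a Pareto eigenvalue of `A`. -/
def IsParetoEigenvalue {n : ℕ} (A : Matrix (Fin n) (Fin n) ℝ) (lam : ℝ) : Prop :=
  ∃ x, IsParetoEigenpair A lam x

/-- The distance matrix of a graph on `Fin n`, as a real matrix. -/
noncomputable def distMatrix {n : ℕ} (G : SimpleGraph (Fin n)) : Matrix (Fin n) (Fin n) ℝ :=
  fun i j => (G.dist i j : ℝ)

/-- The set `Π(G)` of distance Pareto eigenvalues of `G`. -/
def distParetoSet {n : ℕ} (G : SimpleGraph (Fin n)) : Set ℝ :=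
  {lam | IsParetoEigenvalue (distMatrix G) lam}

/-- `a` is the `k`-th largest element of the (finite) set `S`. -/
def IsKthLargest (S : Set ℝ) (k : ℕ) (a : ℝ) : Prop :=
  a ∈ S ∧ {x ∈ S | a < x}.ncard = k - 1

/-- `a` is the `k`-th smallest element of the (finite) set `S`. -/
def IsKthSmallest (S : Set ℝ) (k : ℕ) (a : ℝ) : Prop :=
  a ∈ S ∧ {x ∈ S | x < a}.ncard = k - 1

/-- The star graph `S_n` on `n` vertices: vertex `0` is adjacent to all others. -/
def starGraph (n : ℕ) : SimpleGraph (Fin n) where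
  Adj i j := i ≠ j ∧ (i.val = 0 ∨ j.val = 0)
  symm := ⟨fun i j h => ⟨h.1.symm, h.2.symm⟩⟩
  loopless := ⟨fun i h => h.1 rfl⟩

/-- The graph `S_n⁺`: the star `S_n` plus one edge between the pendant vertices `1` and `2`. -/
def starPlusGraph (n : ℕ) : SimpleGraph (Fin n) where
  Adj i j := i ≠ j ∧
    ((i.val = 0 ∨ j.val = 0) ∨ (i.val = 1 ∧ j.val = 2) ∨ (i.val = 2 ∧ j.val = 1))
  symm := ⟨fun i j h => ⟨h.1.symm, by tauto⟩⟩
  loopless := ⟨fun i h => h.1 rfl⟩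

/-- The wheel graph `W_n` on `n` vertices: hub `0` joined to the cycle `1 - 2 - ⋯ - (n-1) - 1`. -/
def wheelGraph (n : ℕ) : SimpleGraph (Fin n) where
  Adj i j := i ≠ j ∧ (i.val = 0 ∨ j.val = 0 ∨
    i.val + 1 = j.val ∨ j.val + 1 = i.val ∨
    (i.val = 1 ∧ j.val = n - 1) ∨ (j.val = 1 ∧ i.val = n - 1))
  symm := ⟨fun i j h => ⟨h.1.symm, by tauto⟩⟩
  loopless := ⟨fun i h => h.1 rfl⟩

/-- `K₄ - e`: the complete graph on 4 vertices minus the edge `{0,1}`. -/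
def k4MinusE : SimpleGraph (Fin 4) where
  Adj i j := i ≠ j ∧ ¬((i.val = 0 ∧ j.val = 1) ∨ (i.val = 1 ∧ j.val = 0))
  symm := ⟨fun i j h => ⟨h.1.symm, by tauto⟩⟩
  loopless := ⟨fun i h => h.1 rfl⟩

/-- `C₃ * C₃`: two triangles `{0,1,2}` and `{0,3,4}` glued at the common vertex `0`. -/
def c3c3Graph : SimpleGraph (Fin 5) where
  Adj i j := i ≠ j ∧ (i.val = 0 ∨ j.val = 0 ∨
    (i.val ≤ 2 ∧ j.val ≤ 2) ∨ (3 ≤ i.val ∧ 3 ≤ j.val))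
  symm := ⟨fun i j h => ⟨h.1.symm, by tauto⟩⟩
  loopless := ⟨fun i h => h.1 rfl⟩

/-!
A Pareto eigenvector `x` of a nonnegative matrix satisfies `(A x)ᵢ = λ xᵢ` on its support
(the slack `xᵀ(Ax - λx)` is a sum of nonnegative terms adding up to `0`), so `λ` is an
eigenvalue of the principal submatrix of `D(G)` on the support. If all distances inside the
support `S` equal `1`, this forces `λ = |S| - 1`; if `|S| = 2` it forces `λ = d(a, b)`; and if
`|S| ≥ 3` contains two vertices at distance `≥ 2`, the inequalities at those two vertices and a
third one give `λ² ≥ 2λ + 2`, i.e. `λ ≥ 1 + √3`. Hence `0, 1, 2` are the only distance Pareto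
eigenvalues below `1 + √3`, and all four values are attained: by a vertex, an edge, two vertices
at distance `2`, and the vector `(1, √3 - 1, 1)` on an induced path `a - b - c`.
-/

theorem Matrix.mul_add_mul_le_mulVec_apply {ι : Type*} [Fintype ι] {A : Matrix ι ι ℝ}
    {x : ι → ℝ} (hA : ∀ i j, 0 ≤ A i j) (hx : ∀ j, 0 ≤ x j) (i : ι) {p q : ι} (hpq : p ≠ q) :
    A i p * x p + A i q * x q ≤ (A *ᵥ x) i := by
  classical
  calc A i p * x p + A i q * x q = ∑ j ∈ {p, q}, A i j * x j :=
      (Finset.sum_pair (f := fun j => A i j * x j) hpq).symm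
    _ ≤ ∑ j, A i j * x j := Finset.sum_le_sum_of_subset_of_nonneg (Finset.subset_univ _)
        fun j _ _ => mul_nonneg (hA i j) (hx j)

theorem dotProduct_self_pos {ι : Type*} [Fintype ι] {x : ι → ℝ} (hx : x ≠ 0) : 0 < x ⬝ᵥ x :=
  (Finset.sum_nonneg fun i _ => mul_self_nonneg (x i)).lt_of_ne
    (Ne.symm (dotProduct_self_eq_zero.not.mpr hx))

noncomputable def posSupport {n : ℕ} (x : Fin n → ℝ) : Finset (Fin n) := {i | 0 < x i}

@[simp]
theorem mem_posSupport {n : ℕ} {x : Fin n → ℝ} {i : Fin n} : i ∈ posSupport x ↔ 0 < x i := by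
  simp [posSupport]

theorem one_lt_sqrt_three : 1 < √3 := by
  rw [Real.lt_sqrt zero_le_one]; norm_num

theorem sqrt_three_lt_two : √3 < 2 := by
  rw [Real.sqrt_lt' two_pos]; norm_num

theorem one_add_sqrt_three_le_of_two_mul_add_two_le_sq {t : ℝ} (ht : 0 ≤ t)
    (h : 2 * t + 2 ≤ t ^ 2) : 1 + √3 ≤ t := by
  have : √3 ≤ t - 1 := Real.sqrt_le_iff.mpr ⟨by nlinarith, by nlinarith⟩
  linarith

namespace IsParetoEigenpair

variable {n : ℕ} {A : Matrix (Fin n) (Fin n) ℝ} {lam : ℝ} {x : Fin n → ℝ}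

theorem of_mulVec_apply_eq (hx0 : x ≠ 0) (hx : ∀ i, 0 ≤ x i) (hA : ∀ i j, 0 ≤ A i j)
    (heq : ∀ i, x i ≠ 0 → (A *ᵥ x) i = lam * x i) : IsParetoEigenpair A lam x := by
  have hxx := dotProduct_self_pos hx0
  have hrow : ∀ i, x i * (A *ᵥ x) i = lam * (x i * x i) := fun i => by
    by_cases hi : x i = 0
    · simp [hi]
    · rw [heq i hi]; ring
  refine ⟨hx0, hx, fun i => ?_, ?_⟩
  · by_cases hi : x i = 0
    · rw [hi, mul_zero]
      exact Finset.sum_nonneg (s := Finset.univ) (f := fun j => A i j * x j)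
        fun j _ => mul_nonneg (hA i j) (hx j)
    · exact (heq i hi).ge
  · rw [eq_div_iff hxx.ne', dotProduct, dotProduct, Finset.sum_congr rfl fun i _ => hrow i,
      Finset.mul_sum]

theorem nonneg (h : IsParetoEigenpair A lam x) (i : Fin n) : 0 ≤ x i := h.2.1 i

theorem eq_zero_of_notMem_posSupport (h : IsParetoEigenpair A lam x) {i : Fin n}
    (hi : i ∉ posSupport x) : x i = 0 :=
  le_antisymm (not_lt.mp (mem_posSupport.not.mp hi)) (h.nonneg i)

theorem posSupport_nonempty (h : IsParetoEigenpair A lam x) : (posSupport x).Nonempty := by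
  by_contra hS
  exact h.1 (funext fun i => h.eq_zero_of_notMem_posSupport fun hi => hS ⟨i, hi⟩)

theorem mulVec_apply_eq (h : IsParetoEigenpair A lam x) {i : Fin n} (hi : 0 < x i) :
    (A *ᵥ x) i = lam * x i := by
  obtain ⟨hx0, hx, hle, hray⟩ := h
  have hxx := dotProduct_self_pos hx0
  have hslack : ∑ j, x j * ((A *ᵥ x) j - lam * x j) = 0 := by
    rw [eq_div_iff hxx.ne'] at hray
    simp only [mul_sub, Finset.sum_sub_distrib, mul_left_comm _ lam, ← Finset.mul_sum]
    rw [← dotProduct, ← dotProduct, ← hray]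
    ring
  have := (Finset.sum_eq_zero_iff_of_nonneg fun j _ =>
    mul_nonneg (hx j) (sub_nonneg.mpr (hle j))).mp hslack i (Finset.mem_univ i)
  linarith [(mul_eq_zero.mp this).resolve_left hi.ne']

theorem mulVec_apply_eq_sum_posSupport (h : IsParetoEigenpair A lam x) (i : Fin n) :
    (A *ᵥ x) i = ∑ j ∈ posSupport x, A i j * x j :=
  (Finset.sum_subset (f := fun j => A i j * x j) (Finset.subset_univ _) fun j _ hj => by
    rw [h.eq_zero_of_notMem_posSupport hj, mul_zero]).symm

theorem eq_of_posSupport_eq_pair (h : IsParetoEigenpair A lam x) (hdiag : ∀ i, A i i = 0)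
    (hsymm : A.IsSymm) {a b : Fin n} (hab : a ≠ b) (hA : 0 ≤ A a b)
    (hS : posSupport x = {a, b}) : lam = A a b := by
  have hxa : 0 < x a := mem_posSupport.mp (by simp [hS])
  have hxb : 0 < x b := mem_posSupport.mp (by simp [hS])
  have ha : lam * x a = A a b * x b := by
    rw [← h.mulVec_apply_eq hxa, h.mulVec_apply_eq_sum_posSupport, hS,
      Finset.sum_pair (f := fun j => A a j * x j) hab, hdiag, zero_mul, zero_add]
  have hb : lam * x b = A a b * x a := by
    rw [← h.mulVec_apply_eq hxb, h.mulVec_apply_eq_sum_posSupport, hS,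
      Finset.sum_pair (f := fun j => A b j * x j) hab, hdiag, zero_mul, add_zero, hsymm.apply]
  have hlam : 0 ≤ lam := by nlinarith [mul_nonneg hA hxb.le]
  refine (sq_eq_sq₀ hlam hA).mp (mul_right_cancel₀ hxa.ne' ?_)
  linear_combination lam * ha + A a b * hb

theorem eq_card_posSupport_sub_one (h : IsParetoEigenpair A lam x) (hdiag : ∀ i, A i i = 0)
    (hone : ∀ i ∈ posSupport x, ∀ j ∈ posSupport x, i ≠ j → A i j = 1) :
    lam = (posSupport x).card - 1 := by
  set S := posSupport x
  set T := ∑ j ∈ S, x j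
  have hrow : ∀ i ∈ S, lam * x i = T - x i := by
    intro i hi
    rw [← h.mulVec_apply_eq (mem_posSupport.mp hi), h.mulVec_apply_eq_sum_posSupport,
      ← Finset.sum_erase_add _ _ hi, hdiag, zero_mul, add_zero, ← Finset.sum_erase_eq_sub hi]
    exact Finset.sum_congr rfl fun j hj => by
      rw [hone i hi j (Finset.mem_of_mem_erase hj) (Finset.ne_of_mem_erase hj).symm, one_mul]
  have hT : 0 < T := Finset.sum_pos (fun j hj => mem_posSupport.mp hj) h.posSupport_nonempty
  refine mul_right_cancel₀ hT.ne' ?_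
  rw [Finset.mul_sum, Finset.sum_congr rfl hrow, Finset.sum_sub_distrib, Finset.sum_const,
    nsmul_eq_mul]
  ring

theorem one_add_sqrt_three_le (h : IsParetoEigenpair A lam x) (hA : ∀ i j, 0 ≤ A i j)
    (hoff : ∀ i j, i ≠ j → 1 ≤ A i j) (hsymm : A.IsSymm) {i j k : Fin n} (hij : i ≠ j)
    (hki : k ≠ i) (hkj : k ≠ j) (hi : 0 < x i) (hj : 0 < x j) (hk : 0 < x k)
    (hfar : 2 ≤ A i j) : 1 + √3 ≤ lam := by
  have hfar' : 2 ≤ A j i := hsymm.apply i j ▸ hfar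
  have hk' : x i + x j ≤ lam * x k := by
    rw [← h.mulVec_apply_eq hk]
    calc x i + x j ≤ A k i * x i + A k j * x j := by
          nlinarith [hoff k i hki, hoff k j hkj]
      _ ≤ _ := Matrix.mul_add_mul_le_mulVec_apply hA h.nonneg k hij
  have hi' : x k + 2 * x j ≤ lam * x i := by
    rw [← h.mulVec_apply_eq hi]
    calc x k + 2 * x j ≤ A i k * x k + A i j * x j := by nlinarith [hoff i k hki.symm]
      _ ≤ _ := Matrix.mul_add_mul_le_mulVec_apply hA h.nonneg i hkj
  have hj' : x k + 2 * x i ≤ lam * x j := by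
    rw [← h.mulVec_apply_eq hj]
    calc x k + 2 * x i ≤ A j k * x k + A j i * x i := by nlinarith [hoff j k hkj.symm]
      _ ≤ _ := Matrix.mul_add_mul_le_mulVec_apply hA h.nonneg j hki
  have hlam : 0 < lam := pos_of_mul_pos_left (by linarith) hk.le
  refine one_add_sqrt_three_le_of_two_mul_add_two_le_sq hlam.le
    (le_of_mul_le_mul_right ?_ (add_pos hi hj))
  -- `lam * (hi' + hj')`, then `hk'` for the `lam * x k` term
  nlinarith

end IsParetoEigenpair

section Attained

variable {n : ℕ} {A : Matrix (Fin n) (Fin n) ℝ}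

theorem isParetoEigenvalue_apply (hA : ∀ i j, 0 ≤ A i j) (hdiag : ∀ i, A i i = 0)
    (hsymm : A.IsSymm) (a b : Fin n) : IsParetoEigenvalue A (A a b) := by
  rcases eq_or_ne a b with rfl | hab
  · refine ⟨Pi.single a 1, .of_mulVec_apply_eq ?_ ?_ hA fun i hi => ?_⟩
    · simp
    · intro i; simp only [Pi.single_apply]; split_ifs <;> norm_num
    · obtain rfl : i = a := by by_contra hia; simp [hia] at hi
      simp [Matrix.mulVec_single, hdiag]
  · refine ⟨Pi.single a 1 + Pi.single b 1, .of_mulVec_apply_eq ?_ ?_ hA fun i hi => ?_⟩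
    · intro h0; simpa [hab] using congrFun h0 a
    · intro i; simp only [Pi.add_apply, Pi.single_apply]; split_ifs <;> norm_num
    · have : i = a ∨ i = b := by by_contra! hi'; simp [hi'.1, hi'.2] at hi
      rcases this with rfl | rfl
      · simp [Matrix.mulVec_add, Matrix.mulVec_single, hdiag, hab]
      · simp [Matrix.mulVec_add, Matrix.mulVec_single, hdiag, hab.symm, hsymm.apply]

theorem isParetoEigenvalue_one_add_sqrt_three (hA : ∀ i j, 0 ≤ A i j) (hdiag : ∀ i, A i i = 0)
    (hsymm : A.IsSymm) {a b c : Fin n} (hab : A a b = 1) (hbc : A b c = 1) (hac : A a c = 2) :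
    IsParetoEigenvalue A (1 + √3) := by
  have hne : ∀ {i j}, A i j ≠ 0 → i ≠ j := fun h hij => h (hij ▸ hdiag _)
  have hab' : a ≠ b := hne (by simp [hab])
  have hbc' : b ≠ c := hne (by simp [hbc])
  have hac' : a ≠ c := hne (by simp [hac])
  have hba : A b a = 1 := (hsymm.apply a b).trans hab
  have hcb : A c b = 1 := (hsymm.apply b c).trans hbc
  have hca : A c a = 2 := (hsymm.apply a c).trans hac
  have hs : √3 ^ 2 = 3 := Real.sq_sqrt (by norm_num)
  have hs1 := one_lt_sqrt_three
  refine ⟨Pi.single a 1 + Pi.single b (√3 - 1) + Pi.single c 1,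
    .of_mulVec_apply_eq ?_ ?_ hA fun i hi => ?_⟩
  · intro h0; simpa [hab', hac'] using congrFun h0 a
  · intro i; simp only [Pi.add_apply, Pi.single_apply]; split_ifs <;> linarith
  · have : i = a ∨ i = b ∨ i = c := by by_contra! hi'; simp [hi'.1, hi'.2.1, hi'.2.2] at hi
    rcases this with rfl | rfl | rfl <;>
      simp [Matrix.mulVec_add, Matrix.mulVec_single, hdiag, hab', hbc', hac', hab'.symm,
        hbc'.symm, hac'.symm, hab, hbc, hac, hba, hcb, hca] <;>
      nlinarith

end Attained

section DistMatrix

variable {n : ℕ}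

theorem distMatrix_apply (G : SimpleGraph (Fin n)) (i j : Fin n) :
    distMatrix G i j = G.dist i j :=
  rfl

theorem distMatrix_nonneg (G : SimpleGraph (Fin n)) (i j : Fin n) : 0 ≤ distMatrix G i j :=
  Nat.cast_nonneg _

theorem distMatrix_apply_self (G : SimpleGraph (Fin n)) (i : Fin n) : distMatrix G i i = 0 := by
  simp [distMatrix]

theorem distMatrix_isSymm (G : SimpleGraph (Fin n)) : (distMatrix G).IsSymm :=
  Matrix.IsSymm.ext fun i j => by simp [distMatrix, dist_comm]

theorem one_le_distMatrix_apply {G : SimpleGraph (Fin n)} (hG : G.Connected) {i j : Fin n}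
    (h : i ≠ j) : 1 ≤ distMatrix G i j := by
  rw [distMatrix_apply, Nat.one_le_cast]
  exact hG.pos_dist_of_ne h

theorem distMatrix_apply_eq_one_of_adj {G : SimpleGraph (Fin n)} {i j : Fin n} (h : G.Adj i j) :
    distMatrix G i j = 1 := by
  simp [distMatrix, dist_eq_one_iff_adj.mpr h]

end DistMatrix

theorem SimpleGraph.Connected.exists_adj_adj_dist_eq_two {V : Type*} {G : SimpleGraph V}
    (hG : G.Connected) (hG' : G ≠ ⊤) : ∃ a b c, G.Adj a b ∧ G.Adj b c ∧ G.dist a c = 2 := by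
  obtain ⟨u, v, huv, huv'⟩ := ne_top_iff_exists_not_adj.mp hG'
  obtain ⟨p, hp⟩ := (hG u v).exists_walk_length_eq_dist
  have hfar : 1 < G.dist u v := by
    have := hG.pos_dist_of_ne huv
    have := dist_eq_one_iff_adj.not.mpr huv'
    omega
  obtain ⟨a, b, c, hab, hbc, hac, hac'⟩ := p.exists_adj_adj_not_adj_ne hp hfar
  have : G.edist a c = 2 :=
    edist_eq_two_iff.mpr ⟨hac', hac, b, G.mem_commonNeighbors.mpr ⟨hab, hbc.symm⟩⟩
  exact ⟨a, b, c, hab, hbc, by simp [SimpleGraph.dist, this]⟩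

theorem IsParetoEigenpair.eq_two_of_two_le_dist {n : ℕ} {G : SimpleGraph (Fin n)}
    (hG : G.Connected) {lam : ℝ} {x : Fin n → ℝ} (h : IsParetoEigenpair (distMatrix G) lam x)
    (hlt : lam < 1 + √3) {i j : Fin n} (hi : i ∈ posSupport x) (hj : j ∈ posSupport x)
    (hij : 2 ≤ G.dist i j) : lam = 2 := by
  have hne : i ≠ j := by rintro rfl; simp at hij
  have hS : posSupport x = {i, j} := by
    refine (Finset.insert_subset hi (Finset.singleton_subset_iff.mpr hj)).antisymm' ?_
    intro k hk
    by_contra hk'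
    simp only [Finset.mem_insert, Finset.mem_singleton, not_or] at hk'
    refine hlt.not_ge (h.one_add_sqrt_three_le (distMatrix_nonneg G)
      (fun _ _ => one_le_distMatrix_apply hG) (distMatrix_isSymm G) hne hk'.1 hk'.2
      (mem_posSupport.mp hi) (mem_posSupport.mp hj) (mem_posSupport.mp hk) ?_)
    rw [distMatrix_apply]
    exact_mod_cast hij
  have hd := h.eq_of_posSupport_eq_pair (distMatrix_apply_self G) (distMatrix_isSymm G) hne
    (distMatrix_nonneg G i j) hS
  have hij3 : G.dist i j < 3 := by
    have : (G.dist i j : ℝ) < 3 := by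
      rw [← distMatrix_apply, ← hd]; linarith [sqrt_three_lt_two]
    exact_mod_cast this
  rw [hd, distMatrix_apply, (by omega : G.dist i j = 2), Nat.cast_ofNat]

theorem eq_zero_or_eq_one_or_eq_two_of_mem_distParetoSet {n : ℕ} {G : SimpleGraph (Fin n)}
    (hG : G.Connected) {lam : ℝ} (hlam : lam ∈ distParetoSet G) (hlt : lam < 1 + √3) :
    lam = 0 ∨ lam = 1 ∨ lam = 2 := by
  obtain ⟨x, h⟩ := hlam
  by_cases hfar : ∃ i ∈ posSupport x, ∃ j ∈ posSupport x, 2 ≤ G.dist i j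
  · obtain ⟨i, hi, j, hj, hij⟩ := hfar
    exact Or.inr (Or.inr (h.eq_two_of_two_le_dist hG hlt hi hj hij))
  push Not at hfar
  have hone : ∀ i ∈ posSupport x, ∀ j ∈ posSupport x, i ≠ j → distMatrix G i j = 1 := by
    intro i hi j hj hij
    have := hG.pos_dist_of_ne hij
    have := hfar i hi j hj
    rw [distMatrix_apply, (by omega : G.dist i j = 1), Nat.cast_one]
  have hcard := h.eq_card_posSupport_sub_one (distMatrix_apply_self G) hone
  have hpos := h.posSupport_nonempty.card_pos
  have hlt4 : (posSupport x).card < 4 := by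
    exact_mod_cast (by linarith [sqrt_three_lt_two] : ((posSupport x).card : ℝ) < 4)
  obtain hc | hc | hc : (posSupport x).card = 1 ∨ (posSupport x).card = 2 ∨
      (posSupport x).card = 3 := by omega
  all_goals rw [hcard, hc]; norm_num

theorem stmt13 (n : ℕ) (G : SimpleGraph (Fin n)) (hG : G.Connected) (hnc : G ≠ ⊤) :
    IsKthSmallest (distParetoSet G) 4 (1 + Real.sqrt 3) := by
  obtain ⟨a, b, c, hab, hbc, hac⟩ := hG.exists_adj_adj_dist_eq_two hnc
  have dab := distMatrix_apply_eq_one_of_adj hab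
  have dbc := distMatrix_apply_eq_one_of_adj hbc
  have dac : distMatrix G a c = 2 := by rw [distMatrix_apply, hac, Nat.cast_ofNat]
  have hentry := isParetoEigenvalue_apply (distMatrix_nonneg G) (distMatrix_apply_self G)
    (distMatrix_isSymm G)
  have hs := one_lt_sqrt_three
  refine ⟨isParetoEigenvalue_one_add_sqrt_three (distMatrix_nonneg G) (distMatrix_apply_self G)
    (distMatrix_isSymm G) dab dbc dac, ?_⟩
  have hbelow : {y ∈ distParetoSet G | y < 1 + √3} = {0, 1, 2} := by
    ext y
    refine ⟨fun ⟨hy, hlt⟩ => eq_zero_or_eq_one_or_eq_two_of_mem_distParetoSet hG hy hlt, ?_⟩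
    rintro (rfl | rfl | rfl)
    · exact ⟨distMatrix_apply_self G a ▸ hentry a a, by linarith⟩
    · exact ⟨dab ▸ hentry a b, by linarith⟩
    · exact ⟨dac ▸ hentry a c, by linarith⟩
  rw [hbelow, Set.ncard_insert_of_notMem (by norm_num), Set.ncard_pair (by norm_num)]
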